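/- Consider a reaction network with rate constants κ_k and general intensity functions λ_k built from functions θ_i : ℤ → ℝ_{≥0} satisfying θ_i(x) = 0 for x ≤ 0, θ_i(j) > 0 for all integers j ≥ 1, and θ_i(x) → ∞ as x → ∞ for each i = 1,…,m. Suppose that for some c ∈ ℝ^m_{>0} the product-form measure π_c satisfies the stationarity equation ∑_{k=1}^K π_c(x − y_k' + y_k) λ_k(x − y_k' + y_k) = π_c(x) ∑_{k=1}^K λ_k(x) for every x ∈ ℤ^m_{≥0}. Then c is a complex balanced equilibrium of the network: for every complex z ∈ C, ∑_{k : y_k' = z} κ_k c^{y_k} = ∑_{k : y_k = z} κ_k c^{y_k}. -/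

import Mathlib

open Finset Filter

/-- General (non-mass action) intensity function:
`λ_k(x) = κ_k ∏_i ∏_{j=0}^{y_{ki}-1} θ_i(x_i - j)`. -/
noncomputable def genIntensity (m K : ℕ) (y : Fin K → Fin m → ℕ) (κ : Fin K → ℝ)
    (θ : Fin m → ℤ → ℝ) (k : Fin K) (x : Fin m → ℤ) : ℝ :=
  κ k * ∏ i, ∏ j ∈ Finset.range (y k i), θ i (x i - j)

/-- Product-form measure `π_c(x) = ∏_i c_i^{x_i} / ∏_{j=1}^{x_i} θ_i(j)`,
extended by `0` outside `ℤ^m_{≥0}`. -/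
noncomputable def prodForm (m : ℕ) (c : Fin m → ℝ) (θ : Fin m → ℤ → ℝ)
    (x : Fin m → ℤ) : ℝ :=
  if ∀ i, 0 ≤ x i then
    ∏ i, (c i ^ (x i).toNat / ∏ j ∈ Finset.range (x i).toNat, θ i (j + 1))
  else 0

/-- `c` is a complex balanced equilibrium: for each complex `z`,
`∑_{k : y_k' = z} κ_k c^{y_k} = ∑_{k : y_k = z} κ_k c^{y_k}`. -/
def complexBalanced (m K : ℕ) (y y' : Fin K → Fin m → ℕ) (κ : Fin K → ℝ)
    (c : Fin m → ℝ) : Prop :=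
  ∀ z : Fin m → ℕ, ((∃ k, y k = z) ∨ (∃ k, y' k = z)) →
    ∑ k ∈ Finset.univ.filter (fun k => y' k = z), κ k * ∏ i, c i ^ y k i =
    ∑ k ∈ Finset.univ.filter (fun k => y k = z), κ k * ∏ i, c i ^ y k i

/-- The stationarity equation:
`∑_k μ(x - y_k' + y_k) λ_k(x - y_k' + y_k) = μ(x) ∑_k λ_k(x)` for all `x ∈ ℤ^m_{≥0}`. -/
def stationaryEq (m K : ℕ) (y y' : Fin K → Fin m → ℕ)
    (μ : (Fin m → ℤ) → ℝ) (lam : Fin K → (Fin m → ℤ) → ℝ) : Prop :=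
  ∀ x : Fin m → ℕ,
    ∑ k : Fin K, μ (fun i => (x i : ℤ) - y' k i + y k i) *
        lam k (fun i => (x i : ℤ) - y' k i + y k i)
      = μ (fun i => (x i : ℤ)) * ∑ k : Fin K, lam k (fun i => (x i : ℤ))

/-!
Since `π_c(z) λ_k(z) = κ_k c^{y_k} π_c(z - y_k)`, the stationarity equation at `x` says
`∑_w (A'(w) - A(w)) π_c(x - w) = 0`, where `A'(w)` and `A(w)` are the total fluxes
`κ_k c^{y_k}` of the reactions with product resp. source `w`. As `π_c` vanishes outside the
orthant and `π_c(0) = 1`, this system is unitriangular for the componentwise order on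
complexes, so well-founded induction gives `A' = A`.
-/

theorem Finset.sum_mul_comp_eq_sum_fiberwise {ι κ R : Type*} [NonUnitalNonAssocSemiring R]
    [DecidableEq κ] {s : Finset ι} {t : Finset κ} {g : ι → κ} (h : ∀ i ∈ s, g i ∈ t)
    (a : ι → R) (G : κ → R) :
    ∑ i ∈ s, a i * G (g i) = ∑ j ∈ t, (∑ i ∈ s with g i = j, a i) * G j := by
  rw [← sum_fiberwise_of_maps_to h]
  refine sum_congr rfl fun j _ => ?_
  rw [sum_mul]
  exact sum_congr rfl fun i hi => by rw [(mem_filter.1 hi).2]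

theorem prod_range_succ_split_top {M : Type*} [CommMonoid M] (f : ℤ → M) {w N : ℕ}
    (hw : w ≤ N) :
    ∏ j ∈ range N, f (j + 1) =
      (∏ j ∈ range (N - w), f (j + 1)) * ∏ j ∈ range w, f (N - j) := by
  conv_lhs => rw [← Nat.sub_add_cancel hw, prod_range_add]
  rw [← prod_range_reflect (fun j => f (N - j)) w]
  congr 1
  refine prod_congr rfl fun j hj => ?_
  have := mem_range.1 hj
  congr 1
  omega

theorem pow_div_prod_mul_prod_top {F : Type*} [Field F] (a : F) {θ : ℤ → F}
    (hθ : ∀ j : ℤ, 1 ≤ j → θ j ≠ 0) {w N : ℕ} (hw : w ≤ N) :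
    (a ^ N / ∏ j ∈ range N, θ (j + 1)) * ∏ j ∈ range w, θ (N - j) =
      a ^ w * (a ^ (N - w) / ∏ j ∈ range (N - w), θ (j + 1)) := by
  have htop : ∏ j ∈ range w, θ (N - j) ≠ 0 :=
    prod_ne_zero_iff.2 fun j hj => hθ _ (by have := mem_range.1 hj; omega)
  rw [prod_range_succ_split_top θ hw, ← div_div, div_mul_cancel₀ _ htop, mul_div_assoc',
    ← pow_add, Nat.add_sub_cancel' hw]

section ProductForm

variable {m : ℕ} {c : Fin m → ℝ} {θ : Fin m → ℤ → ℝ}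

theorem prodForm_zero : prodForm m c θ 0 = 1 := by
  simp [prodForm]

theorem prodForm_eq_zero_of_exists_neg {x : Fin m → ℤ} (h : ∃ i, x i < 0) :
    prodForm m c θ x = 0 := by
  obtain ⟨i, hi⟩ := h
  exact if_neg fun hx => (hx i).not_gt hi

theorem prodForm_mul_prod_sub (hθ0 : ∀ i, ∀ x : ℤ, x ≤ 0 → θ i x = 0)
    (hθ : ∀ i, ∀ j : ℤ, 1 ≤ j → θ i j ≠ 0) (w : Fin m → ℕ) (z : Fin m → ℤ) :
    prodForm m c θ z * ∏ i, ∏ j ∈ range (w i), θ i (z i - j) =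
      (∏ i, c i ^ w i) * prodForm m c θ (fun i => z i - w i) := by
  by_cases hwz : ∀ i, (w i : ℤ) ≤ z i
  · have hz : ∀ i, 0 ≤ z i := fun i => (Int.natCast_nonneg _).trans (hwz i)
    rw [prodForm, prodForm, if_pos hz, if_pos fun i => sub_nonneg.2 (hwz i),
      ← prod_mul_distrib, ← prod_mul_distrib]
    refine prod_congr rfl fun i _ => ?_
    obtain ⟨N, hN⟩ := Int.eq_ofNat_of_zero_le (hz i)
    have hwN : w i ≤ N := by have := hwz i; omega
    rw [hN, Int.toNat_natCast, ← Nat.cast_sub hwN, Int.toNat_natCast]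
    exact pow_div_prod_mul_prod_top (c i) (hθ i) hwN
  · obtain ⟨i, hi⟩ := not_forall.1 hwz
    rw [prodForm_eq_zero_of_exists_neg (x := fun i => z i - w i) ⟨i, by omega⟩, mul_zero]
    by_cases hz : ∀ i, 0 ≤ z i
    · -- the factor `j = z i` on the left is `θ i 0 = 0`
      have hzi := hz i
      exact mul_eq_zero_of_right _ (prod_eq_zero (mem_univ i) (prod_eq_zero
        (mem_range.2 (show (z i).toNat < w i by omega)) (hθ0 i _ (by omega))))
    · exact mul_eq_zero_of_left (if_neg hz) _

theorem prodForm_mul_genIntensity {K : ℕ} {y : Fin K → Fin m → ℕ} {κ : Fin K → ℝ}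
    (hθ0 : ∀ i, ∀ x : ℤ, x ≤ 0 → θ i x = 0) (hθ : ∀ i, ∀ j : ℤ, 1 ≤ j → θ i j ≠ 0)
    (k : Fin K) (z : Fin m → ℤ) :
    prodForm m c θ z * genIntensity m K y κ θ k z =
      κ k * (∏ i, c i ^ y k i) * prodForm m c θ (fun i => z i - y k i) := by
  rw [genIntensity, mul_left_comm, prodForm_mul_prod_sub hθ0 hθ, mul_assoc]

theorem sum_mul_prodForm_eq_of_stationaryEq {K : ℕ} {y y' : Fin K → Fin m → ℕ}
    {κ : Fin K → ℝ} (hθ0 : ∀ i, ∀ x : ℤ, x ≤ 0 → θ i x = 0)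
    (hθ : ∀ i, ∀ j : ℤ, 1 ≤ j → θ i j ≠ 0)
    (hstat : stationaryEq m K y y' (prodForm m c θ) (genIntensity m K y κ θ))
    (x : Fin m → ℕ) :
    ∑ k, κ k * (∏ i, c i ^ y k i) * prodForm m c θ (fun i => x i - y' k i) =
      ∑ k, κ k * (∏ i, c i ^ y k i) * prodForm m c θ (fun i => x i - y k i) := by
  have h := hstat x
  rw [mul_sum] at h
  simp only [prodForm_mul_genIntensity hθ0 hθ, add_sub_cancel_right] at h
  exact h

end ProductForm

theorem eq_zero_of_forall_sum_mul_sub_eq_zero {ι R : Type*} [Finite ι] [Semiring R]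
    (T : Finset (ι → ℕ)) (f : (ι → ℕ) → R) {g : (ι → ℤ) → R} (hg0 : g 0 = 1)
    (hg : ∀ v, (∃ i, v i < 0) → g v = 0)
    (h : ∀ x : ι → ℕ, ∑ w ∈ T, f w * g (fun i => x i - w i) = 0) :
    ∀ z ∈ T, f z = 0 := by
  intro z
  induction z using WellFoundedLT.induction with
  | _ z ih =>
    intro hz
    have hsum := h z
    rw [sum_eq_single_of_mem z hz fun w hw hwz => ?_] at hsum
    · simpa [← Pi.zero_def, hg0] using hsum
    by_cases hle : w ≤ z
    · rw [ih w (lt_of_le_of_ne hle hwz) hw, zero_mul]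
    · obtain ⟨i, hi⟩ := not_forall.1 (mt Pi.le_def.2 hle)
      rw [hg _ ⟨i, by omega⟩, mul_zero]

theorem stmt6_general (m K : ℕ) (y y' : Fin K → Fin m → ℕ) (κ : Fin K → ℝ)
    (c : Fin m → ℝ) (θ : Fin m → ℤ → ℝ)
    (hθ0 : ∀ i, ∀ x : ℤ, x ≤ 0 → θ i x = 0)
    (hθpos : ∀ i, ∀ j : ℤ, 1 ≤ j → 0 < θ i j)
    (hstat : stationaryEq m K y y' (prodForm m c θ) (genIntensity m K y κ θ)) :
    complexBalanced m K y y' κ c := by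
  intro z hz
  set a : Fin K → ℝ := fun k => κ k * ∏ i, c i ^ y k i
  set T := univ.image y ∪ univ.image y'
  have hT : z ∈ T := by simpa [T, or_comm] using hz
  have hfib : ∀ x : Fin m → ℕ, ∑ w ∈ T, (∑ k with y' k = w, a k - ∑ k with y k = w, a k) *
      prodForm m c θ (fun i => x i - w i) = 0 := by
    intro x
    simp only [sub_mul, sum_sub_distrib]
    rw [← sum_mul_comp_eq_sum_fiberwise fun k _ =>
        mem_union_right _ (mem_image_of_mem y' (mem_univ k)),
      ← sum_mul_comp_eq_sum_fiberwise fun k _ =>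
        mem_union_left _ (mem_image_of_mem y (mem_univ k)),
      sub_eq_zero]
    exact sum_mul_prodForm_eq_of_stationaryEq hθ0 (fun i j hj => (hθpos i j hj).ne') hstat x
  exact sub_eq_zero.1 (eq_zero_of_forall_sum_mul_sub_eq_zero T _ prodForm_zero
    (fun _ => prodForm_eq_zero_of_exists_neg) hfib z hT)

/-- (Converse, `θ_i → ∞` case.) If the product-form measure `π_c`
satisfies the stationarity equation for the stochastic model with general intensity
functions, then `c` is a complex balanced equilibrium. -/
theorem stmt6 (m K : ℕ) (y y' : Fin K → Fin m → ℕ) (κ : Fin K → ℝ)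
    (c : Fin m → ℝ) (θ : Fin m → ℤ → ℝ)
    (hyy' : ∀ k, y k ≠ y' k) (hκ : ∀ k, 0 < κ k) (hc : ∀ i, 0 < c i)
    (hθnn : ∀ i x, 0 ≤ θ i x)
    (hθ0 : ∀ i, ∀ x : ℤ, x ≤ 0 → θ i x = 0)
    (hθpos : ∀ i, ∀ j : ℤ, 1 ≤ j → 0 < θ i j)
    (hθlim : ∀ i, Filter.Tendsto (θ i) Filter.atTop Filter.atTop)
    (hstat : stationaryEq m K y y' (prodForm m c θ) (genIntensity m K y κ θ)) :
    complexBalanced m K y y' κ c :=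
  stmt6_general m K y y' κ c θ hθ0 hθpos hstat
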